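/- Let ε ∈ (0,1). Suppose the instance has K distinct time intervals T_(1), …, T_(K), and let S_k = {i ∈ [n] : T_i = T_(k)}. For each k ∈ [K] let D_(k) be a set of integer shifts with |D_(k)| ≤ ⌊1/ε⌋ + 1, and let {S^D_{k,τ}}_{τ∈D_(k)} and {S^APX_{k,τ}}_{τ∈D_(k)} be two partitions of S_k such that H(S^APX_{k,τ}) ≤ (1 + ε)·H(S^D_{k,τ}) + (2ε²/K)·H_Σ for every k ∈ [K] and τ ∈ D_(k), where H(S) = Σ_{i∈S} H_i. Let τ^D be the shift vector assigning shift τ to every item of S^D_{k,τ}, and let τ^APX be the shift vector assigning shift τ to every item of S^APX_{k,τ}. If I_max(τ^D) ≤ (1 + 4ε)·OPT^disc, then I_max(τ^APX) ≤ (1 + 17ε)·OPT^disc. -/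

import Mathlib

noncomputable def invLevel (T H : ℕ) (τ t : ℤ) : ℝ :=
  (H : ℝ) * (1 - (((t - τ) % (T : ℤ) : ℤ) : ℝ) / (T : ℝ))

noncomputable def totalInv {ι : Type*} [Fintype ι] (T H : ι → ℕ) (τ : ι → ℤ) (t : ℤ) : ℝ :=
  ∑ i, invLevel (T i) (H i) (τ i) t

def cycleLen {ι : Type*} [Fintype ι] (T : ι → ℕ) : ℕ := Finset.univ.lcm T

noncomputable def Imax {ι : Type*} [Fintype ι] (T H : ι → ℕ) (τ : ι → ℤ) : ℝ :=
  sSup (totalInv T H τ '' Set.Ico (0 : ℤ) (cycleLen T : ℤ))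

noncomputable def OPTdisc {ι : Type*} [Fintype ι] (T H : ι → ℕ) : ℝ :=
  sInf (Set.range (Imax T H))

/-!
Every item contributes `H_i · s(t)` with a sawtooth `s ∈ [0, 1]`, so grouping the items by
interval and shift writes the total inventory as a combination of the class weights
`H(S_{k,τ})` with coefficients in `[0, 1]`. Replacing the `τ^D`-classes by the `τ^APX`-classes
therefore costs at most a factor `1 + ε` plus `Σ_k |D_(k)| · (2ε²/K) H_Σ ≤ 4ε H_Σ`. Since a
sawtooth averages to at least `1/2` over a cycle (pair `t` with its reflection `2τ - 1 - t`),
`H_Σ ≤ 2 OPT^disc`, and `(1 + ε)(1 + 4ε) + 8ε ≤ 1 + 17ε`.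
-/

open Finset

noncomputable def sawtooth (T : ℕ) (τ t : ℤ) : ℝ :=
  1 - (((t - τ) % (T : ℤ) : ℤ) : ℝ) / (T : ℝ)

lemma invLevel_eq_mul_sawtooth (T H : ℕ) (τ t : ℤ) :
    invLevel T H τ t = H * sawtooth T τ t := rfl

lemma sawtooth_nonneg (T : ℕ) (τ t : ℤ) : 0 ≤ sawtooth T τ t := by
  rcases Nat.eq_zero_or_pos T with rfl | hT
  · simp [sawtooth]
  have hlt : (t - τ) % (T : ℤ) < T := Int.emod_lt_of_pos _ (by exact_mod_cast hT)
  have : (((t - τ) % (T : ℤ) : ℤ) : ℝ) / T ≤ 1 := by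
    rw [div_le_one (by exact_mod_cast hT)]
    exact_mod_cast hlt.le
  unfold sawtooth
  linarith

lemma sawtooth_le_one (T : ℕ) (τ t : ℤ) : sawtooth T τ t ≤ 1 := by
  rcases Nat.eq_zero_or_pos T with rfl | hT
  · simp [sawtooth]
  have : 0 ≤ (((t - τ) % (T : ℤ) : ℤ) : ℝ) / T :=
    div_nonneg (by exact_mod_cast Int.emod_nonneg _ (by omega)) (Nat.cast_nonneg T)
  unfold sawtooth
  linarith

lemma Int.neg_sub_one_emod {T : ℤ} (hT : 0 < T) (a : ℤ) : (-a - 1) % T = T - 1 - a % T := by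
  have h0 := Int.emod_nonneg a hT.ne'
  have h1 := Int.emod_lt_of_pos a hT
  have hshift : T - 1 - a % T = -a - 1 + T * (1 + a / T) := by rw [Int.emod_def]; ring
  rw [← Int.emod_eq_of_lt (by omega) (by omega : T - 1 - a % T < T), hshift,
    Int.add_mul_emod_self_left]

lemma sawtooth_add_sawtooth_reflect {T : ℕ} (hT : 0 < T) {Λ : ℤ} (hdvd : (T : ℤ) ∣ Λ)
    (τ t : ℤ) :
    sawtooth T τ t + sawtooth T τ ((2 * τ - 1 - t) % Λ) = 1 + 1 / (T : ℝ) := by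
  have hmod : ((2 * τ - 1 - t) % Λ - τ) % (T : ℤ) = T - 1 - (t - τ) % T := by
    rw [Int.sub_emod, Int.emod_emod_of_dvd _ hdvd, ← Int.sub_emod,
      ← Int.neg_sub_one_emod (by exact_mod_cast hT)]
    ring_nf
  have hT' : (T : ℝ) ≠ 0 := by positivity
  simp only [sawtooth, hmod]
  push_cast
  field_simp
  ring

lemma sum_Ico_emod_sub {M : Type*} [AddCommMonoid M] {Λ : ℤ} (hΛ : 0 < Λ) (c : ℤ)
    (f : ℤ → M) : ∑ t ∈ Ico 0 Λ, f ((c - t) % Λ) = ∑ t ∈ Ico 0 Λ, f t := by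
  have hmaps : ∀ t ∈ Ico 0 Λ, (c - t) % Λ ∈ Ico 0 Λ := fun t _ =>
    mem_Ico.mpr ⟨Int.emod_nonneg _ hΛ.ne', Int.emod_lt_of_pos _ hΛ⟩
  have hinv : ∀ t ∈ Ico 0 Λ, (c - (c - t) % Λ) % Λ = t := fun t ht => by
    obtain ⟨h0, h1⟩ := mem_Ico.mp ht
    rw [Int.sub_emod, Int.emod_emod, ← Int.sub_emod, sub_sub_cancel, Int.emod_eq_of_lt h0 h1]
  exact sum_nbij' _ _ hmaps hmaps hinv hinv fun _ _ => rfl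

lemma two_mul_sum_sawtooth {T : ℕ} (hT : 0 < T) {Λ : ℕ} (hΛ : 0 < Λ) (hdvd : T ∣ Λ) (τ : ℤ) :
    2 * ∑ t ∈ Ico (0 : ℤ) Λ, sawtooth T τ t = Λ * (1 + 1 / (T : ℝ)) := by
  calc 2 * ∑ t ∈ Ico (0 : ℤ) Λ, sawtooth T τ t
      = ∑ t ∈ Ico (0 : ℤ) Λ, (sawtooth T τ t + sawtooth T τ ((2 * τ - 1 - t) % Λ)) := by
        rw [sum_add_distrib, sum_Ico_emod_sub (by exact_mod_cast hΛ) _ (sawtooth T τ)]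
        ring
    _ = Λ * (1 + 1 / (T : ℝ)) := by
        rw [sum_congr rfl fun t _ =>
            sawtooth_add_sawtooth_reflect hT (by exact_mod_cast hdvd) τ t,
          sum_const, Int.card_Ico, sub_zero, Int.toNat_natCast, nsmul_eq_mul]

section Imax

variable {ι : Type*} [Fintype ι] {T : ι → ℕ} (H : ι → ℕ)

lemma cycleLen_pos (hT : ∀ i, 0 < T i) : 0 < cycleLen T :=
  Nat.pos_of_ne_zero fun h => by
    obtain ⟨i, -, hi⟩ := Finset.lcm_eq_zero_iff.mp h
    exact (hT i).ne' hi

lemma totalInv_le_Imax (τ : ι → ℤ) {t : ℤ} (ht : t ∈ Ico (0 : ℤ) (cycleLen T)) :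
    totalInv T H τ t ≤ Imax T H τ :=
  le_csSup ((Set.finite_Ico _ _).image _).bddAbove ⟨t, by simpa using ht, rfl⟩

lemma half_sum_le_Imax (hT : ∀ i, 0 < T i) (τ : ι → ℤ) :
    (∑ i, (H i : ℝ)) / 2 ≤ Imax T H τ := by
  set Λ := cycleLen T
  have hΛ : (0 : ℝ) < Λ := by exact_mod_cast cycleLen_pos hT
  have hItem : ∀ i, (Λ : ℝ) / 2 ≤ ∑ t ∈ Ico (0 : ℤ) Λ, sawtooth (T i) (τ i) t := fun i => by
    have hexact := two_mul_sum_sawtooth (hT i) (cycleLen_pos hT) (dvd_lcm (mem_univ i)) (τ i)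
    have : (0 : ℝ) ≤ Λ * (1 / T i) := by positivity
    linarith
  have hSum : Λ * ((∑ i, (H i : ℝ)) / 2) ≤ Λ * Imax T H τ :=
    calc Λ * ((∑ i, (H i : ℝ)) / 2) = ∑ i, (H i : ℝ) * (Λ / 2) := by
          rw [sum_div, mul_sum]; exact sum_congr rfl fun i _ => by ring
      _ ≤ ∑ i, (H i : ℝ) * ∑ t ∈ Ico (0 : ℤ) Λ, sawtooth (T i) (τ i) t :=
          sum_le_sum fun i _ => mul_le_mul_of_nonneg_left (hItem i) (Nat.cast_nonneg _)
      _ = ∑ t ∈ Ico (0 : ℤ) Λ, totalInv T H τ t := by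
          simp only [totalInv, invLevel_eq_mul_sawtooth, mul_sum]
          exact sum_comm
      _ ≤ #(Ico (0 : ℤ) Λ) • Imax T H τ := sum_le_card_nsmul _ _ _ fun t ht =>
          totalInv_le_Imax H τ ht
      _ = Λ * Imax T H τ := by simp
  exact le_of_mul_le_mul_left hSum hΛ

lemma half_sum_le_OPTdisc (hT : ∀ i, 0 < T i) : (∑ i, (H i : ℝ)) / 2 ≤ OPTdisc T H :=
  le_csInf (Set.range_nonempty _) (Set.forall_mem_range.mpr (half_sum_le_Imax H hT))

lemma Imax_le_of_totalInv_le (hT : ∀ i, 0 < T i) {σ τ : ι → ℤ} {a b : ℝ} (ha : 0 ≤ a)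
    (h : ∀ t, totalInv T H σ t ≤ a * totalInv T H τ t + b) :
    Imax T H σ ≤ a * Imax T H τ + b := by
  have hΛ : (0 : ℤ) < cycleLen T := by exact_mod_cast cycleLen_pos hT
  refine csSup_le ⟨_, 0, ⟨le_rfl, hΛ⟩, rfl⟩ ?_
  rintro _ ⟨t, ht, rfl⟩
  have hτ := totalInv_le_Imax H τ (t := t) (by simpa using ht)
  nlinarith [h t]

end Imax

/-- The ordering quantity `H(S_{k,τ'})` of the items of interval class `k` with shift `τ'`. -/
noncomputable def classWeight {ι κ : Type*} [Fintype ι] [DecidableEq κ] (H : ι → ℕ)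
    (kIdx : ι → κ) (σ : ι → ℤ) (k : κ) (τ' : ℤ) : ℝ :=
  ∑ i ∈ univ.filter (fun i => kIdx i = k ∧ σ i = τ'), (H i : ℝ)

section Classes

variable {ι κ : Type*} [Fintype ι] [Fintype κ] [DecidableEq κ]
  {T : ι → ℕ} (H : ι → ℕ) {Tk : κ → ℕ} {kIdx : ι → κ} {D : κ → Finset ℤ}

lemma totalInv_eq_sum_classWeight (hk : ∀ i, T i = Tk (kIdx i)) {σ : ι → ℤ}
    (hσ : ∀ i, σ i ∈ D (kIdx i)) (t : ℤ) :
    totalInv T H σ t = ∑ k, ∑ τ' ∈ D k, sawtooth (Tk k) τ' t * classWeight H kIdx σ k τ' := by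
  rw [totalInv, ← sum_fiberwise univ kIdx]
  refine sum_congr rfl fun k _ => ?_
  rw [← sum_fiberwise_of_maps_to (t := D k) (fun i hi => (mem_filter.mp hi).2 ▸ hσ i)
    (fun i => invLevel (T i) (H i) (σ i) t)]
  refine sum_congr rfl fun τ' _ => ?_
  rw [classWeight, filter_filter, mul_sum]
  refine sum_congr (by simp) fun i hi => ?_
  obtain ⟨-, hik, hiτ⟩ := mem_filter.mp hi
  rw [invLevel_eq_mul_sawtooth, hk i, hik, hiτ, mul_comm]

lemma totalInv_le_of_classWeight_le (hk : ∀ i, T i = Tk (kIdx i)) {σ τ : ι → ℤ}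
    (hσ : ∀ i, σ i ∈ D (kIdx i)) (hτ : ∀ i, τ i ∈ D (kIdx i)) {a c : ℝ} (hc : 0 ≤ c)
    (hw : ∀ k, ∀ τ' ∈ D k, classWeight H kIdx σ k τ' ≤ a * classWeight H kIdx τ k τ' + c)
    (t : ℤ) : totalInv T H σ t ≤ a * totalInv T H τ t + (∑ k, (#(D k) : ℝ)) * c := by
  rw [totalInv_eq_sum_classWeight H hk hσ, totalInv_eq_sum_classWeight H hk hτ, mul_sum,
    sum_mul, ← sum_add_distrib]
  refine sum_le_sum fun k _ => ?_
  rw [mul_sum, ← nsmul_eq_mul, ← sum_const, ← sum_add_distrib]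
  refine sum_le_sum fun τ' hτ' => ?_
  have hs0 := sawtooth_nonneg (Tk k) τ' t
  have hs1 := sawtooth_le_one (Tk k) τ' t
  have := mul_le_mul_of_nonneg_left (hw k τ' hτ') hs0
  nlinarith

end Classes

lemma sum_card_mul_le_four_mul {κ α : Type*} [Fintype κ] {D : κ → Finset α} {ε h : ℝ}
    (hε0 : 0 < ε) (hε1 : ε ≤ 1) (hh : 0 ≤ h) (hD : ∀ k, #(D k) ≤ ⌊1 / ε⌋₊ + 1) :
    (∑ k, (#(D k) : ℝ)) * (2 * ε ^ 2 / Fintype.card κ * h) ≤ 4 * ε * h := by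
  set N : ℝ := (Fintype.card κ : ℝ)
  have hCard : ∑ k, (#(D k) : ℝ) ≤ N * (1 / ε + 1) := by
    calc ∑ k, (#(D k) : ℝ) ≤ ∑ _k : κ, (1 / ε + 1) := sum_le_sum fun k _ => by
          have := Nat.floor_le (one_div_pos.mpr hε0).le
          have : (#(D k) : ℝ) ≤ ⌊1 / ε⌋₊ + 1 := by exact_mod_cast hD k
          linarith
      _ = N * (1 / ε + 1) := by rw [sum_const, card_univ, nsmul_eq_mul]
  calc (∑ k, (#(D k) : ℝ)) * (2 * ε ^ 2 / N * h) ≤ N * (1 / ε + 1) * (2 * ε ^ 2 / N * h) :=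
        mul_le_mul_of_nonneg_right hCard (by positivity)
    -- `N / N ≤ 1` rather than `= 1`, so that `κ` may be empty
    _ = 2 * ε * (1 + ε) * h * (N / N) := by field_simp
    _ ≤ 2 * ε * (1 + ε) * h := mul_le_of_le_one_right (by positivity) (div_self_le_one N)
    _ ≤ 4 * ε * h := by nlinarith [mul_nonneg (mul_nonneg hε0.le (sub_nonneg.2 hε1)) hh]

theorem stmt15_general {n K : ℕ} (T H : Fin n → ℕ) (hT : ∀ i, 0 < T i)
    (ε : ℝ) (hε : ε ∈ Set.Ioo (0 : ℝ) 1)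
    (Tvals : Fin K → ℕ)
    (kIdx : Fin n → Fin K) (hk : ∀ i, T i = Tvals (kIdx i))
    (D : Fin K → Finset ℤ) (hD : ∀ k, (D k).card ≤ ⌊1 / ε⌋₊ + 1)
    (τD τAPX : Fin n → ℤ)
    (hτD : ∀ i, τD i ∈ D (kIdx i)) (hτA : ∀ i, τAPX i ∈ D (kIdx i))
    (hmimic : ∀ k, ∀ τ' ∈ D k,
      ∑ i ∈ Finset.univ.filter (fun i => kIdx i = k ∧ τAPX i = τ'), (H i : ℝ)
        ≤ (1 + ε) * ∑ i ∈ Finset.univ.filter (fun i => kIdx i = k ∧ τD i = τ'), (H i : ℝ)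
          + (2 * ε ^ 2 / (K : ℝ)) * ∑ i, (H i : ℝ))
    (hgood : Imax T H τD ≤ (1 + 4 * ε) * OPTdisc T H) :
    Imax T H τAPX ≤ (1 + 17 * ε) * OPTdisc T H := by
  obtain ⟨hε0, hε1⟩ := hε
  set Hsum := ∑ i, (H i : ℝ)
  have hOPT : Hsum / 2 ≤ OPTdisc T H := half_sum_le_OPTdisc H hT
  have hApx : Imax T H τAPX ≤ (1 + ε) * Imax T H τD
      + (∑ k, (#(D k) : ℝ)) * (2 * ε ^ 2 / K * Hsum) :=
    Imax_le_of_totalInv_le H hT (by linarith)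
      (totalInv_le_of_classWeight_le H hk hτA hτD (by positivity) hmimic)
  have hErr : (∑ k, (#(D k) : ℝ)) * (2 * ε ^ 2 / K * Hsum) ≤ 4 * ε * Hsum := by
    simpa using sum_card_mul_le_four_mul hε0 hε1.le (by positivity : 0 ≤ Hsum) hD
  have hOPT0 : 0 ≤ OPTdisc T H := le_trans (by positivity) hOPT
  nlinarith [mul_le_mul_of_nonneg_left hgood (by linarith : 0 ≤ 1 + ε),
    mul_nonneg (mul_nonneg hε0.le (sub_nonneg.2 hε1.le)) hOPT0,
    mul_nonneg hε0.le (by linarith : 0 ≤ 2 * OPTdisc T H - Hsum)]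

/-- Mimicking partitions preserve near-optimality: if the items are grouped by their
`K` distinct time intervals, each class is partitioned according to shifts from the
sets `D_(k)` of size at most `⌊1/ε⌋+1`, and the cumulative ordering quantities of the
approximate partition classes satisfy
`H(S^APX_{k,τ}) ≤ (1+ε)·H(S^D_{k,τ}) + (2ε²/K)·H_Σ`, then
`I_max(τ^D) ≤ (1+4ε)·OPT^disc` implies `I_max(τ^APX) ≤ (1+17ε)·OPT^disc`. -/
theorem stmt15 {n K : ℕ} (hK : 0 < K) (T H : Fin n → ℕ) (hT : ∀ i, 0 < T i)
    (hH : ∀ i, 0 < H i) (ε : ℝ) (hε : ε ∈ Set.Ioo (0 : ℝ) 1)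
    (Tvals : Fin K → ℕ) (hTinj : Function.Injective Tvals)
    (kIdx : Fin n → Fin K) (hk : ∀ i, T i = Tvals (kIdx i))
    (D : Fin K → Finset ℤ) (hD : ∀ k, (D k).card ≤ ⌊1 / ε⌋₊ + 1)
    (τD τAPX : Fin n → ℤ)
    (hτD : ∀ i, τD i ∈ D (kIdx i)) (hτA : ∀ i, τAPX i ∈ D (kIdx i))
    (hmimic : ∀ k, ∀ τ' ∈ D k,
      ∑ i ∈ Finset.univ.filter (fun i => kIdx i = k ∧ τAPX i = τ'), (H i : ℝ)
        ≤ (1 + ε) * ∑ i ∈ Finset.univ.filter (fun i => kIdx i = k ∧ τD i = τ'), (H i : ℝ)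
          + (2 * ε ^ 2 / (K : ℝ)) * ∑ i, (H i : ℝ))
    (hgood : Imax T H τD ≤ (1 + 4 * ε) * OPTdisc T H) :
    Imax T H τAPX ≤ (1 + 17 * ε) * OPTdisc T H :=
  stmt15_general T H hT ε hε Tvals kIdx hk D hD τD τAPX hτD hτA hmimic hgood
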